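/- Let n and d' be positive integers with 1 ≤ d' < n/2, and let λ be a real number with 2/3 ≤ λ < 1 such that λd' is an integer ≥ 2. Set δ = d'/n. Then ∑_{w=1}^{λd'−1} C(n,w) · ∑_{i=1}^{d'} ∑_{j=⌈(w+i−d')/2⌉⁺}^{min{w,i}} C(w,j)·C(n−w,i−j) ≤ 2^{n·( H₂(δ) + H₂(λδ) )}. -/

import Mathlib

open Finset

/-- `⌈(w+i-d')/2⌉⁺`: the smallest nonnegative integer `m` with `m ≥ (w+i-d')/2`. -/
def ceilPos (w i d' : ℕ) : ℕ := (((w : ℤ) + i - d' + 1) / 2).toNat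

/-- The binary entropy function. -/
noncomputable def binH (x : ℝ) : ℝ := -x * Real.logb 2 x - (1 - x) * Real.logb 2 (1 - x)

/-!
Both sums are bounded by partial sums of binomial coefficients. By Vandermonde's identity the
inner double sum is at most `∑_{i ≤ d'} C(n,i)`, and the outer factor at most `∑_{w ≤ λd'} C(n,w)`.
Each partial sum `∑_{i ≤ k} C(n,i)` with `k ≤ n/2` is at most `2^{n H₂(k/n)}`: with `p = k/n ≤ 1/2`
every term satisfies `C(n,i) p^k (1-p)^{n-k} ≤ C(n,i) p^i (1-p)^{n-i}`, and these sum to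
`(p + (1-p))^n = 1`, while `p^k (1-p)^{n-k} = 2^{-n H₂(p)}`.
-/

lemma sum_Icc_choose_mul_choose_le_choose {n w : ℕ} (hw : w ≤ n) (a i : ℕ) :
    ∑ j ∈ Icc a (min w i), (w.choose j : ℝ) * ((n - w).choose (i - j) : ℝ) ≤ n.choose i := by
  have vandermonde :
      (n.choose i : ℝ) = ∑ j ∈ range (i + 1), (w.choose j : ℝ) * ((n - w).choose (i - j) : ℝ) := by
    rw [← Nat.add_sub_cancel' hw, Nat.add_choose_eq, Nat.sum_antidiagonal_eq_sum_range_succ_mk,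
      Nat.add_sub_cancel_left]
    push_cast
    rfl
  rw [vandermonde]
  refine sum_le_sum_of_subset_of_nonneg (fun j hj => ?_) (fun j _ _ => by positivity)
  simp only [mem_Icc, mem_range] at hj ⊢
  omega

lemma sum_Icc_choose_le_sum_range_choose (n : ℕ) {a b c : ℕ} (hbc : b ≤ c) :
    ∑ i ∈ Icc a b, (n.choose i : ℝ) ≤ ∑ i ∈ range (c + 1), (n.choose i : ℝ) := by
  refine sum_le_sum_of_subset_of_nonneg (fun i hi => ?_) (fun i _ _ => by positivity)
  simp only [mem_Icc, mem_range] at hi ⊢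
  omega

lemma pow_mul_one_sub_pow_le {p : ℝ} (hp0 : 0 ≤ p) (hp : p ≤ 1 - p) {i k n : ℕ}
    (hik : i ≤ k) (hkn : k ≤ n) :
    p ^ k * (1 - p) ^ (n - k) ≤ p ^ i * (1 - p) ^ (n - i) := by
  calc p ^ k * (1 - p) ^ (n - k) = p ^ i * p ^ (k - i) * (1 - p) ^ (n - k) := by
        rw [← pow_add, Nat.add_sub_cancel' hik]
    _ ≤ p ^ i * (1 - p) ^ (k - i) * (1 - p) ^ (n - k) := by
        gcongr
        exact pow_nonneg (hp0.trans hp) _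
    _ = p ^ i * (1 - p) ^ (n - i) := by
        rw [mul_assoc, ← pow_add]
        congr 2
        omega

lemma sum_range_choose_mul_le_one {p : ℝ} (hp0 : 0 ≤ p) (hp : p ≤ 1 - p) {k n : ℕ}
    (hkn : k ≤ n) :
    (∑ i ∈ range (k + 1), (n.choose i : ℝ)) * (p ^ k * (1 - p) ^ (n - k)) ≤ 1 := by
  have hp1 : 0 ≤ 1 - p := by linarith
  rw [sum_mul]
  calc ∑ i ∈ range (k + 1), (n.choose i : ℝ) * (p ^ k * (1 - p) ^ (n - k))
      ≤ ∑ i ∈ range (k + 1), p ^ i * (1 - p) ^ (n - i) * n.choose i := by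
        refine sum_le_sum fun i hi => ?_
        rw [mul_comm]
        exact mul_le_mul_of_nonneg_right
          (pow_mul_one_sub_pow_le hp0 hp (Nat.lt_succ_iff.mp (mem_range.mp hi)) hkn)
          (Nat.cast_nonneg _)
    _ ≤ ∑ i ∈ range (n + 1), p ^ i * (1 - p) ^ (n - i) * n.choose i :=
        sum_le_sum_of_subset_of_nonneg (range_subset_range.mpr (by omega))
          fun i _ _ => by positivity
    _ = 1 := by rw [← add_pow, add_sub_cancel, one_pow]

lemma two_rpow_neg_natCast_mul_logb {x : ℝ} (hx : 0 < x) (m : ℕ) :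
    (2 : ℝ) ^ (-(m : ℝ) * Real.logb 2 x) = (x ^ m)⁻¹ := by
  rw [neg_mul, Real.rpow_neg zero_le_two, mul_comm, Real.rpow_mul zero_le_two,
    Real.rpow_logb two_pos (by norm_num) hx, Real.rpow_natCast]

lemma two_rpow_natCast_mul_binH {k n : ℕ} (hk : 0 < k) (hkn : k < n) :
    (2 : ℝ) ^ ((n : ℝ) * binH ((k : ℝ) / n)) =
      (((k : ℝ) / n) ^ k * (1 - (k : ℝ) / n) ^ (n - k))⁻¹ := by
  have hn : (0 : ℝ) < n := by exact_mod_cast hk.trans hkn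
  have hkn' : (k : ℝ) < n := by exact_mod_cast hkn
  have hp0 : 0 < (k : ℝ) / n := by positivity
  have hp1 : 0 < 1 - (k : ℝ) / n := by rw [sub_pos, div_lt_one hn]; exact hkn'
  have hexp : (n : ℝ) * binH ((k : ℝ) / n) =
      -(k : ℝ) * Real.logb 2 ((k : ℝ) / n) +
        -((n - k : ℕ) : ℝ) * Real.logb 2 (1 - (k : ℝ) / n) := by
    rw [binH, Nat.cast_sub hkn.le]
    field_simp
    ring
  rw [hexp, Real.rpow_add two_pos, two_rpow_neg_natCast_mul_logb hp0,
    two_rpow_neg_natCast_mul_logb hp1, mul_inv]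

lemma sum_range_choose_le_two_rpow_mul_binH {k n : ℕ} (hkn : 2 * k ≤ n) :
    ∑ i ∈ range (k + 1), (n.choose i : ℝ) ≤ (2 : ℝ) ^ ((n : ℝ) * binH ((k : ℝ) / n)) := by
  rcases Nat.eq_zero_or_pos k with rfl | hk
  · simp [binH]
  have hn : (0 : ℝ) < n := by exact_mod_cast (by omega : 0 < n)
  have hp0 : 0 < (k : ℝ) / n := by positivity
  have hp : (k : ℝ) / n ≤ 1 - (k : ℝ) / n := by
    rw [le_sub_iff_add_le, ← two_mul, mul_div_assoc', div_le_one hn]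
    exact_mod_cast hkn
  have hp1 : 0 < 1 - (k : ℝ) / n := by linarith
  rw [two_rpow_natCast_mul_binH hk (by omega), ← one_div, le_div_iff₀ (by positivity)]
  exact sum_range_choose_mul_le_one hp0.le hp (by omega)

theorem statement17_general (n d' : ℕ) (hdn : 2 * d' < n)
    (lam : ℝ) (hlam1 : lam < 1)
    (w0 : ℕ) (hw0 : (w0 : ℝ) = lam * (d' : ℝ)) :
    (∑ w ∈ Finset.Icc 1 (w0 - 1), (n.choose w : ℝ) *
      ∑ i ∈ Finset.Icc 1 d', ∑ j ∈ Finset.Icc (ceilPos w i d') (min w i),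
        (w.choose j : ℝ) * ((n - w).choose (i - j) : ℝ))
    ≤ (2 : ℝ) ^ ((n : ℝ) * (binH ((d' : ℝ) / n) + binH (lam * ((d' : ℝ) / n)))) := by
  have hw0d : w0 ≤ d' := by
    have : (w0 : ℝ) ≤ d' := by rw [hw0]; nlinarith [(Nat.cast_nonneg d' : (0 : ℝ) ≤ d')]
    exact_mod_cast this
  set S : ℕ → ℝ := fun k => ∑ i ∈ range (k + 1), (n.choose i : ℝ)
  have inner (w : ℕ) (hw : w ∈ Icc 1 (w0 - 1)) :
      ∑ i ∈ Icc 1 d', ∑ j ∈ Icc (ceilPos w i d') (min w i),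
        (w.choose j : ℝ) * ((n - w).choose (i - j) : ℝ) ≤ S d' :=
    (sum_le_sum fun i _ => sum_Icc_choose_mul_choose_le_choose (by simp only [mem_Icc] at hw; omega) _ i).trans
      (sum_Icc_choose_le_sum_range_choose n le_rfl)
  calc _ ≤ ∑ w ∈ Icc 1 (w0 - 1), (n.choose w : ℝ) * S d' :=
        sum_le_sum fun w hw => mul_le_mul_of_nonneg_left (inner w hw) (Nat.cast_nonneg _)
    _ = (∑ w ∈ Icc 1 (w0 - 1), (n.choose w : ℝ)) * S d' := (sum_mul ..).symm
    _ ≤ S w0 * S d' := mul_le_mul_of_nonneg_right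
        (sum_Icc_choose_le_sum_range_choose n (Nat.sub_le w0 1))
        (sum_nonneg fun i _ => Nat.cast_nonneg _)
    _ ≤ (2 : ℝ) ^ ((n : ℝ) * binH ((w0 : ℝ) / n)) * (2 : ℝ) ^ ((n : ℝ) * binH ((d' : ℝ) / n)) :=
        mul_le_mul (sum_range_choose_le_two_rpow_mul_binH (by omega))
          (sum_range_choose_le_two_rpow_mul_binH hdn.le)
          (sum_nonneg fun i _ => Nat.cast_nonneg _) (Real.rpow_nonneg zero_le_two _)
    _ = _ := by rw [← Real.rpow_add two_pos, hw0, mul_div_assoc]; ring_nf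

theorem statement17 (n d' : ℕ) (hd : 1 ≤ d') (hdn : 2 * d' < n)
    (lam : ℝ) (hlam0 : 2 / 3 ≤ lam) (hlam1 : lam < 1)
    (w0 : ℕ) (hw0 : (w0 : ℝ) = lam * (d' : ℝ)) (hw02 : 2 ≤ w0) :
    (∑ w ∈ Finset.Icc 1 (w0 - 1), (n.choose w : ℝ) *
      ∑ i ∈ Finset.Icc 1 d', ∑ j ∈ Finset.Icc (ceilPos w i d') (min w i),
        (w.choose j : ℝ) * ((n - w).choose (i - j) : ℝ))
    ≤ (2 : ℝ) ^ ((n : ℝ) * (binH ((d' : ℝ) / n) + binH (lam * ((d' : ℝ) / n)))) :=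
  statement17_general n d' hdn lam hlam1 w0 hw0
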